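/- Let R be a ring and suppose every left R-module satisfies: every submodule inclusion is pure. Then R is von Neumann regular. Conversely, if R is von Neumann regular, then every submodule of every left R-module is a pure submodule. -/

import Mathlib

/-!
Regularity of `a` is purity of `R a ≤ R` for the single equation `a • x = a`, solved by
`x = 1` in `R`.

Conversely, over a regular ring every row `a` has a column `r` with `(a ⬝ᵥ r) • a = a`. Given a
system whose right-hand sides lie in `N` and which is solvable in `M`, subtract `(bᵢ ⬝ᵥ r)` times
the first equation `a · x = v₀` from each other equation `bᵢ · x = vᵢ`, solve the reduced system
in `N` by induction, and correct that solution `w` to `w + r • (v₀ - a · w)`: the correction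
repairs the first equation because `a ⬝ᵥ r` acts as the identity on every combination of the
entries of `a`, and it leaves the reduced equations unchanged.
-/

open Finset

section

variable {R : Type*} [Ring R]

theorem exists_dotProduct_smul_eq_self (hR : ∀ a : R, ∃ x, a * x * a = a) :
    ∀ {m : ℕ} (a : Fin m → R), ∃ r : Fin m → R, (a ⬝ᵥ r) • a = a
  | 0, a => ⟨0, funext fun i => i.elim0⟩
  | m + 1, a => by
    obtain ⟨r, hr⟩ := exists_dotProduct_smul_eq_self hR (Fin.tail a)
    set f := Fin.tail a ⬝ᵥ r
    -- `f` already fixes the tail; the quasi-inverse `y` of `(1 - f) * a 0` repairs the head.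
    obtain ⟨y, hy⟩ := hR ((1 - f) * a 0)
    set t := y * (1 - f)
    have hdot : a ⬝ᵥ Fin.cons t (fun j => r j * (1 - a 0 * t)) = f + (1 - f) * a 0 * t := by
      simp only [dotProduct, Fin.sum_univ_succ, Fin.cons_zero, Fin.cons_succ, ← mul_assoc,
        ← Finset.sum_mul]
      simp only [f, dotProduct, Fin.tail]
      noncomm_ring
    refine ⟨Fin.cons t (fun j => r j * (1 - a 0 * t)), funext fun i => ?_⟩
    rw [Pi.smul_apply, smul_eq_mul, hdot]
    refine Fin.cases ?_ (fun j => ?_) i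
    · calc (f + (1 - f) * a 0 * t) * a 0 = f * a 0 + (1 - f) * a 0 * y * ((1 - f) * a 0) := by
            simp only [t]; noncomm_ring
        _ = a 0 := by rw [hy]; noncomm_ring
    · have hfj : f * a j.succ = a j.succ := congrFun hr j
      have htj : t * a j.succ = 0 := by
        simp only [t, mul_assoc, sub_mul, one_mul, hfj, sub_self, mul_zero]
      rw [add_mul, hfj, mul_assoc, htj, mul_zero, add_zero]

variable {M : Type*} [AddCommGroup M] [Module R M] {ι : Type*} [Fintype ι]

theorem sum_smul_add_smul (b r : ι → R) (w : ι → M) (t : M) :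
    ∑ j, b j • (w j + r j • t) = ∑ j, b j • w j + (b ⬝ᵥ r) • t := by
  simp only [smul_add, sum_add_distrib, smul_smul, dotProduct, sum_smul]

theorem sum_sub_smul_smul (b a : ι → R) (c : R) (x : ι → M) :
    ∑ j, (b j - c * a j) • x j = ∑ j, b j • x j - c • ∑ j, a j • x j := by
  simp only [sub_smul, sum_sub_distrib, smul_sum, smul_smul]

theorem smul_sum_smul_of_smul_eq {f : R} {a : ι → R} (h : f • a = a) (x : ι → M) :
    f • ∑ j, a j • x j = ∑ j, a j • x j := by
  simp only [smul_sum, smul_smul]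
  exact sum_congr rfl fun j _ => by rw [← smul_eq_mul, ← Pi.smul_apply f a, h]

theorem Submodule.exists_solution_mem_of_regular (hR : ∀ a : R, ∃ x, a * x * a = a)
    (N : Submodule R M) {m : ℕ} (x : Fin m → M) :
    ∀ {k : ℕ} (A : Matrix (Fin k) (Fin m) R) (v : Fin k → M), (∀ i, v i ∈ N) →
      (∀ i, ∑ j, A i j • x j = v i) → ∃ y : Fin m → M, (∀ j, y j ∈ N) ∧ ∀ i, ∑ j, A i j • y j = v i
  | 0, _, _, _, _ => ⟨0, fun _ => N.zero_mem, fun i => i.elim0⟩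
  | k + 1, A, v, hv, hx => by
    obtain ⟨r, hr⟩ := exists_dotProduct_smul_eq_self hR (A 0)
    set c : Fin k → R := fun i => A i.succ ⬝ᵥ r
    obtain ⟨w, hwN, hw⟩ := exists_solution_mem_of_regular hR N x
      (fun i j => A i.succ j - c i * A 0 j) (fun i => v i.succ - c i • v 0)
      (fun i => N.sub_mem (hv i.succ) (N.smul_mem _ (hv 0)))
      (fun i => by rw [sum_sub_smul_smul, hx, hx])
    have ht : (A 0 ⬝ᵥ r) • (v 0 - ∑ j, A 0 j • w j) = v 0 - ∑ j, A 0 j • w j := by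
      rw [smul_sub, ← hx 0, smul_sum_smul_of_smul_eq hr, smul_sum_smul_of_smul_eq hr]
    refine ⟨fun j => w j + r j • (v 0 - ∑ j, A 0 j • w j), fun j => ?_, Fin.cases ?_ fun i => ?_⟩
    · exact N.add_mem (hwN j)
        (N.smul_mem _ (N.sub_mem (hv 0) (N.sum_mem fun l _ => N.smul_mem _ (hwN l))))
    · rw [sum_smul_add_smul, ht, add_sub_cancel]
    · have hwi := hw i
      rw [sum_sub_smul_smul, sub_eq_iff_eq_add] at hwi
      rw [sum_smul_add_smul, hwi, smul_sub]
      abel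

end

theorem stmt_7.{u} {R : Type u} [Ring R] :
    (∀ (M : Type u) [AddCommGroup M] [Module R M] (N : Submodule R M),
      ∀ (k m : ℕ) (A : Matrix (Fin k) (Fin m) R) (v : Fin k → N),
        (∃ x : Fin m → M, ∀ i, ∑ j, A i j • x j = (v i : M)) →
        (∃ x : Fin m → N, ∀ i, ∑ j, A i j • x j = v i)) ↔
    (∀ a : R, ∃ x : R, a * x * a = a) := by
  constructor
  · intro hpure a
    obtain ⟨y, hy⟩ := hpure R (Submodule.span R {a}) 1 1 (fun _ _ => a)
      (fun _ => ⟨a, Submodule.mem_span_singleton_self a⟩) ⟨fun _ => 1, fun _ => by simp⟩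
    obtain ⟨r, hr⟩ := Submodule.mem_span_singleton.mp (y 0).2
    refine ⟨r, ?_⟩
    simpa [← hr, mul_assoc] using congrArg Subtype.val (hy 0)
  · rintro hR M _ _ N k m A v ⟨x, hx⟩
    obtain ⟨y, hyN, hy⟩ :=
      N.exists_solution_mem_of_regular hR x A (fun i => v i) (fun i => (v i).2) hx
    exact ⟨fun j => ⟨y j, hyN j⟩, fun i => Subtype.ext (by simpa using hy i)⟩
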